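/- arXiv:2111.06931 — 6 statements merged into one kernel-verified Lean document; each statement's English description precedes it below -/
import Mathlib

section
/- Let a_1, …, a_n ∈ ℝ^N (n ≥ 2) be linearly independent. Let A_n be the n×N matrix whose s-th row is a_sᵀ, G_n := A_n A_nᵀ, and Q_n := A_nᵀ · adj(G_n) · A_n. For each s, let Q_1^s := a_s a_sᵀ, let Q^{s̄} be the quasi projector built in the same way from the n−1 vectors {a_t : t ≠ s}, and let (v^{s̄})² be the determinant of the Gram matrix of {a_t : t ≠ s}. Then Q_n = Σ_{s=1}^n Q_1^s · ((v^{s̄})² I − Q^{s̄}). -/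
/-!
Write `G = A Aᵀ` for the Gram matrix of the rows `a_s` of `A`. Since `Aᵀ (adj G A)` is the sum of
the outer products of `a_s` with the rows of `adj G A`, it suffices to compute row `s` of `adj G`.
Its diagonal entry is the cofactor `det G_{s̄} = (v^{s̄})²`, and comparing the off-diagonal columns
of `adj G · G = det G · I` gives the rest of the row as `-(G_{s,t})_{t ≠ s} · adj G_{s̄}`, provided
`det G_{s̄} ≠ 0`, which is where linear independence enters. As `G_{s,t} = a_s · a_t`, the row of
`adj G A` becomes `(v^{s̄})² a_sᵀ - a_sᵀ Q^{s̄}`.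
-/

open Matrix BigOperators

/-- The quasi projector of the vectors arranged as the rows of `B`:
`Bᵀ · adj(BBᵀ) · B`. -/
noncomputable def quasiOf {ι : Type*} [Fintype ι] [DecidableEq ι] {N : ℕ}
    (B : Matrix ι (Fin N) ℝ) : Matrix (Fin N) (Fin N) ℝ :=
  Bᵀ * (B * Bᵀ).adjugate * B

/-- The matrix whose rows are all vectors `a_t` with `t ≠ s`. -/
def matBar {n N : ℕ} (a : Fin n → Fin N → ℝ) (s : Fin n) :
    Matrix {t : Fin n // t ≠ s} (Fin N) ℝ :=
  Matrix.of fun t => a t.1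

namespace Matrix

variable {ι R : Type*} [Fintype ι]

theorem transpose_mul_eq_sum_vecMulVec {κ μ : Type*} [CommSemiring R] (B : Matrix ι κ R)
    (C : Matrix ι μ R) : Bᵀ * C = ∑ s, vecMulVec (B s) (C s) := by
  ext i j
  simp only [mul_apply, transpose_apply, sum_apply, vecMulVec_apply]

theorem det_mul_transpose_ne_zero {κ : Type*} [DecidableEq ι] [Fintype κ] [Field R]
    [LinearOrder R] [IsStrictOrderedRing R] {B : Matrix ι κ R} (hB : LinearIndependent R B) :
    (B * Bᵀ).det ≠ 0 := by
  intro h0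
  obtain ⟨v, hv, hBv⟩ := exists_mulVec_eq_zero_iff.mpr h0
  have hvB : (v ᵥ* B) ⬝ᵥ (v ᵥ* B) = 0 := by
    rw [← dotProduct_mulVec, ← mulVec_transpose, mulVec_mulVec, hBv, dotProduct_zero]
  refine hv (funext (Fintype.linearIndependent_iff.mp hB v ?_))
  rw [← vecMul_eq_sum]
  exact dotProduct_self_eq_zero.mp hvB

def deleteRowCol (M : Matrix ι ι R) (s : ι) : Matrix {t // t ≠ s} {t // t ≠ s} R :=
  M.submatrix Subtype.val Subtype.val

variable [DecidableEq ι]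

theorem adjugate_apply_self_eq_det_deleteRowCol [CommRing R] (M : Matrix ι ι R) (s : ι) :
    M.adjugate s s = (M.deleteRowCol s).det := by
  let e : {t // t ≠ s} ⊕ PUnit.{1} ≃ ι :=
    (Equiv.optionEquivSumPUnit _).symm.trans (Equiv.optionSubtypeNe s)
  have hblocks : (M.updateRow s (Pi.single s 1)).submatrix e e =
      fromBlocks (M.deleteRowCol s) (of fun t (_ : PUnit.{1}) => M t s) 0 1 := by
    ext (t | _) (u | _)
    · simp [e, deleteRowCol, t.2]
    · simp [e, t.2]
    · simp [e, u.2]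
    · simp [e]
  rw [adjugate_apply, ← det_submatrix_equiv_self e, hblocks, det_fromBlocks_zero₂₁, det_one,
    mul_one]

theorem adjugate_row_eq_neg_vecMul_adjugate_deleteRowCol [CommRing R] [IsDomain R]
    (M : Matrix ι ι R) (s : ι) (hP : (M.deleteRowCol s).det ≠ 0) :
    (fun u : {t // t ≠ s} => M.adjugate s u) =
      -((fun t : {t // t ≠ s} => M s t) ᵥ* (M.deleteRowCol s).adjugate) := by
  set P := M.deleteRowCol s
  set z := fun u : {t // t ≠ s} => M.adjugate s u
  have hz : z ᵥ* P = -(P.det • fun t : {t // t ≠ s} => M s t) := by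
    funext v
    have h := congr_fun (congr_fun (adjugate_mul M) s) v
    rw [mul_apply, Fintype.sum_eq_add_sum_subtype_ne _ s, adjugate_apply_self_eq_det_deleteRowCol,
      smul_apply, one_apply_ne' v.2, smul_zero, add_comm] at h
    rw [Pi.neg_apply, Pi.smul_apply, smul_eq_mul, eq_neg_iff_add_eq_zero]
    exact h
  refine smul_right_injective _ hP ?_
  calc P.det • z = z ᵥ* (P * P.adjugate) := by rw [mul_adjugate, vecMul_smul, vecMul_one]
    _ = (z ᵥ* P) ᵥ* P.adjugate := (vecMul_vecMul ..).symm
    _ = P.det • -((fun t : {t // t ≠ s} => M s t) ᵥ* P.adjugate) := by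
      rw [hz, neg_vecMul, smul_vecMul, smul_neg]

theorem adjugate_mul_apply_eq_of_det_deleteRowCol_ne_zero {κ : Type*} [CommRing R] [IsDomain R]
    (M : Matrix ι ι R) (A : Matrix ι κ R) (s : ι) (hP : (M.deleteRowCol s).det ≠ 0) :
    (M.adjugate * A) s = (M.deleteRowCol s).det • A s -
      ((fun t : {t // t ≠ s} => M s t) ᵥ* (M.deleteRowCol s).adjugate) ᵥ*
        A.submatrix Subtype.val id := by
  rw [show (M.adjugate * A) s = M.adjugate s ᵥ* A from rfl, vecMul_eq_sum,
    Fintype.sum_eq_add_sum_subtype_ne _ s, adjugate_apply_self_eq_det_deleteRowCol,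
    sub_eq_add_neg, ← neg_vecMul, ← adjugate_row_eq_neg_vecMul_adjugate_deleteRowCol M s hP,
    vecMul_eq_sum]
  rfl

end Matrix

theorem adjugate_gram_mul_apply {n N : ℕ} (a : Fin n → Fin N → ℝ) (s : Fin n)
    (hs : (matBar a s * (matBar a s)ᵀ).det ≠ 0) :
    ((of a * (of a)ᵀ).adjugate * of a) s =
      (matBar a s * (matBar a s)ᵀ).det • a s - a s ᵥ* quasiOf (matBar a s) := by
  rw [adjugate_mul_apply_eq_of_det_deleteRowCol_ne_zero (of a * (of a)ᵀ) (of a) s hs, quasiOf,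
    ← vecMul_vecMul, ← vecMul_vecMul]
  rfl

theorem recursive_quasi_projector_general {n N : ℕ}
    (a : Fin n → Fin N → ℝ) (ha : LinearIndependent ℝ a) :
    quasiOf (Matrix.of a) =
      ∑ s : Fin n,
        Matrix.vecMulVec (a s) (a s) *
          ((matBar a s * (matBar a s)ᵀ).det • (1 : Matrix (Fin N) (Fin N) ℝ) -
            quasiOf (matBar a s)) := by
  rw [quasiOf, Matrix.mul_assoc, transpose_mul_eq_sum_vecMulVec]
  refine Finset.sum_congr rfl fun s _ => ?_
  rw [vecMulVec_mul, vecMul_sub, vecMul_smul, vecMul_one,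
    adjugate_gram_mul_apply a s (det_mul_transpose_ne_zero (ha.comp _ Subtype.val_injective))]
  rfl

/-- Recursive quasi projector: for `n ≥ 2` linearly independent vectors,
`Q_n = Σ_s Q_1^s ((v^{s̄})² I − Q^{s̄})`, where `Q_1^s = a_s a_sᵀ`,
`(v^{s̄})²` is the determinant of the Gram matrix of all vectors but `a_s`,
and `Q^{s̄}` is the quasi projector of all vectors but `a_s`. -/
theorem recursive_quasi_projector {n N : ℕ} (hn : 2 ≤ n)
    (a : Fin n → Fin N → ℝ) (ha : LinearIndependent ℝ a) :
    quasiOf (Matrix.of a) =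
      ∑ s : Fin n,
        Matrix.vecMulVec (a s) (a s) *
          ((matBar a s * (matBar a s)ᵀ).det • (1 : Matrix (Fin N) (Fin N) ℝ) -
            quasiOf (matBar a s)) :=
  recursive_quasi_projector_general a ha
end

section
/- Let a_1, …, a_n ∈ ℝ^N be linearly dependent, let A_n be the n×N matrix whose s-th row is a_sᵀ and G_n := A_n A_nᵀ. Then the quasi projector Q_n := A_nᵀ · adj(G_n) · A_n is the zero matrix. -/
open Matrix BigOperators

/-!
With `G = B Bᵀ`, the identity `G · adj G = det G • 1` gives `Q² = det G • Q` for the symmetric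
matrix `Q = Bᵀ · adj G · B`. Dependent rows of `B` make `G` singular, so `Qᵀ Q = Q² = 0`, and a
real matrix with `Qᵀ Q = 0` vanishes.
-/

namespace Matrix

theorem det_mul_eq_zero_of_not_linearIndependent_rows {m n R : Type*} [Fintype m]
    [DecidableEq m] [Fintype n] [CommRing R] [IsDomain R] {A : Matrix m n R}
    (hA : ¬ LinearIndependent R (fun i ↦ A i)) (B : Matrix n m R) :
    (A * B).det = 0 :=
  det_eq_zero_of_not_linearIndependent_rows fun h ↦ hA (h.of_comp (vecMulLinear B))

theorem IsHermitian.eq_zero_of_mul_self_eq_zero {n R : Type*} [Fintype n] [PartialOrder R]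
    [NonUnitalRing R] [StarRing R] [StarOrderedRing R] [NoZeroDivisors R] {A : Matrix n n R}
    (hA : A.IsHermitian) (h : A * A = 0) : A = 0 :=
  conjTranspose_mul_self_eq_zero.mp (hA.eq.symm ▸ h)

end Matrix

section QuasiProjector

variable {ι : Type*} [Fintype ι] [DecidableEq ι] {N : ℕ}

theorem quasiOf_isSymm (B : Matrix ι (Fin N) ℝ) : (quasiOf B).IsSymm := by
  rw [IsSymm, quasiOf, transpose_mul, transpose_mul, adjugate_transpose, transpose_mul,
    transpose_transpose, Matrix.mul_assoc]

theorem quasiOf_mul_self (B : Matrix ι (Fin N) ℝ) :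
    quasiOf B * quasiOf B = (B * Bᵀ).det • quasiOf B := by
  calc quasiOf B * quasiOf B = Bᵀ * (B * Bᵀ).adjugate * (B * Bᵀ * (B * Bᵀ).adjugate) * B := by
        simp only [quasiOf, Matrix.mul_assoc]
    _ = (B * Bᵀ).det • quasiOf B := by
        rw [mul_adjugate, Matrix.mul_smul, Matrix.mul_one, Matrix.smul_mul, quasiOf]

end QuasiProjector

/-- For a linearly dependent set of vectors `a_1, …, a_n`, the quasi projector
`Q_n = A_nᵀ · adj(A_n A_nᵀ) · A_n` is the zero matrix. -/
theorem quasi_projector_of_dependent_eq_zero {n N : ℕ}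
    (a : Fin n → Fin N → ℝ) (ha : ¬ LinearIndependent ℝ a) :
    quasiOf (Matrix.of a) = 0 := by
  have hG : (of a * (of a)ᵀ).det = 0 :=
    det_mul_eq_zero_of_not_linearIndependent_rows ha _
  refine (isHermitian_iff_isSymm.mpr (quasiOf_isSymm _)).eq_zero_of_mul_self_eq_zero ?_
  rw [quasiOf_mul_self, hG, zero_smul]
end

section
/- For every integer n ≥ 2, the total quasi projector satisfies the recursion Φ_n = G · (vol_{n−1} · I − Φ_{n−1}), where I is the N×N identity matrix. -/
open Matrix BigOperators Finset

/-- The submatrix of `A` formed by the rows indexed by the subset `S`. -/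
def subMat {M N : ℕ} (A : Matrix (Fin M) (Fin N) ℝ) (S : Finset (Fin M)) :
    Matrix {i // i ∈ S} (Fin N) ℝ :=
  A.submatrix (fun i => (i : Fin M)) id

/-- The squared volume `v_S² = det (A_S A_Sᵀ)` of the parallelepiped spanned by
the rows of `A` indexed by `S`. -/
noncomputable def volSq {M N : ℕ} (A : Matrix (Fin M) (Fin N) ℝ) (S : Finset (Fin M)) : ℝ :=
  (subMat A S * (subMat A S)ᵀ).det

/-- The quasi projector `Q_S = A_Sᵀ · adj(A_S A_Sᵀ) · A_S`. -/
noncomputable def quasiProj {M N : ℕ} (A : Matrix (Fin M) (Fin N) ℝ) (S : Finset (Fin M)) :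
    Matrix (Fin N) (Fin N) ℝ :=
  (subMat A S)ᵀ * (subMat A S * (subMat A S)ᵀ).adjugate * subMat A S

/-- The total quasi projector `Φ_n = Σ_{|S| = n} Q_S`. -/
noncomputable def totalQuasiProj {M N : ℕ} (A : Matrix (Fin M) (Fin N) ℝ) (n : ℕ) :
    Matrix (Fin N) (Fin N) ℝ :=
  ∑ S ∈ Finset.univ.powersetCard n, quasiProj A S

/-- The sum of squared `n`-volumes `vol_n = Σ_{|S| = n} v_S²` (with `vol_0 = 1`). -/
noncomputable def vol {M N : ℕ} (A : Matrix (Fin M) (Fin N) ℝ) (n : ℕ) : ℝ :=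
  ∑ S ∈ Finset.univ.powersetCard n, volSq A S

/-!
Writing `Q_S = Σ_{m ∈ S} a_mᵀ r_m`, where `r_m` is row `m` of `adj(G_S) A_S`, the expansion of
row `m` of an adjugate along the principal minor `G_{S∖m}` gives
`r_m = a_m (v_{S∖m}² I − Q_{S∖m})`. Summing over `|S| = n` and reindexing by `T = S ∖ {m}`
turns `Φ_n` into `Σ_{|T| = n−1} Σ_{m ∉ T} a_mᵀ a_m (v_T² I − Q_T)`. For `m ∈ T` the summand
vanishes because `a_m Q_T = v_T² a_m`, so the inner sum runs over all `m`, and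
`Σ_m a_mᵀ a_m = G`.
-/

namespace Matrix

variable {R : Type*} [CommRing R] {κ n : Type*}

abbrev eraseRow (X : Matrix κ n R) (m : κ) : Matrix {p // p ≠ m} n R :=
  X.submatrix (↑) id

abbrev eraseRowCol (B : Matrix κ κ R) (m : κ) : Matrix {p // p ≠ m} {p // p ≠ m} R :=
  B.submatrix (↑) (↑)

theorem submatrix_id_mul_transpose [Fintype n] {ι : Type*} (X : Matrix κ n R) (e : ι → κ) :
    X.submatrix e id * (X.submatrix e id)ᵀ = (X * Xᵀ).submatrix e e := by
  rw [transpose_submatrix, ← submatrix_mul _ _ _ id _ Function.bijective_id]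

theorem transpose_mul_eq_sum_vecMulVec_s4 [Fintype κ] {l : Type*} (X : Matrix κ n R)
    (Y : Matrix κ l R) : Xᵀ * Y = ∑ m, vecMulVec (X m) (Y m) := by
  ext i j
  simp [mul_apply, vecMulVec_apply, sum_apply]

section Adjugate

variable [Fintype κ] [DecidableEq κ]

theorem det_eq_det_eraseRowCol_of_row_eq_single (E : Matrix κ κ R) (m : κ)
    (h : E m = Pi.single m 1) : E.det = (E.eraseRowCol m).det := by
  let e : {p // p = m} ⊕ {p // ¬p = m} ≃ κ := Equiv.sumCompl (· = m)
  have h₁₂ : (E.submatrix e e).toBlocks₁₂ = 0 := by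
    ext ⟨i, rfl⟩ ⟨j, hj⟩
    simp [e, toBlocks₁₂, h, hj]
  have h₁₁ : (E.submatrix e e).toBlocks₁₁.det = 1 := by
    rw [det_unique]
    show E m m = 1
    simp [h]
  rw [← det_submatrix_equiv_self e, ← fromBlocks_toBlocks (E.submatrix e e), h₁₂,
    det_fromBlocks_zero₁₂, h₁₁, one_mul]
  rfl

theorem adjugate_apply_self (B : Matrix κ κ R) (m : κ) :
    B.adjugate m m = (B.eraseRowCol m).det := by
  rw [adjugate_apply, det_eq_det_eraseRowCol_of_row_eq_single _ m (by simp)]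
  congr 1
  ext p q
  simp [updateRow_ne p.2]

/-- Swapping rows `m` and `q` of `B.updateRow q (Pi.single m 1)` puts the unit row into row `m`;
what is left is `B'` with row `q` replaced by `B m`, a Cramer-rule entry of `adj B'`. -/
theorem adjugate_apply_of_ne (B : Matrix κ κ R) {m q : κ} (hq : q ≠ m) :
    B.adjugate m q = -∑ p : {p // p ≠ m}, B m p * (B.eraseRowCol m).adjugate p ⟨q, hq⟩ := by
  set D := (B.updateRow q (Pi.single m 1)).submatrix (Equiv.swap m q) id
  have hD : D m = Pi.single m 1 := by
    ext j; simp [D]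
  have hminor : D.eraseRowCol m = (B.eraseRowCol m).updateRow ⟨q, hq⟩ (fun p => B m p) := by
    ext i j
    by_cases hi : (i : κ) = q
    · obtain rfl : i = ⟨q, hq⟩ := Subtype.ext hi
      simp [D, Ne.symm hq]
    · have hi' : i ≠ ⟨q, hq⟩ := fun h => hi (congrArg Subtype.val h)
      simp [D, updateRow_ne hi', Equiv.swap_apply_of_ne_of_ne i.2 hi, updateRow_ne hi]
  have hswap : (B.updateRow q (Pi.single m 1)).det = -D.det := by
    rw [det_permute, Equiv.Perm.sign_swap (Ne.symm hq)]; simp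
  rw [adjugate_apply, hswap, det_eq_det_eraseRowCol_of_row_eq_single D m hD, hminor,
    ← cramer_transpose_apply, cramer_eq_adjugate_mulVec, ← adjugate_transpose]
  simp [mulVec, dotProduct, mul_comm]

theorem adjugate_mul_row_eq (B : Matrix κ κ R) (Y : Matrix κ n R) (m : κ) :
    (B.adjugate * Y) m = (B.eraseRowCol m).det • Y m -
      ((fun p : {p // p ≠ m} => B m p) ᵥ* (B.eraseRowCol m).adjugate) ᵥ* Y.eraseRow m := by
  ext j
  have hoff (q : {q // q ≠ m}) : B.adjugate m q * Y q j =
      -∑ p : {p // p ≠ m}, B m p * (B.eraseRowCol m).adjugate p q * Y q j := by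
    rw [adjugate_apply_of_ne _ q.2, neg_mul, sum_mul]
  rw [mul_apply, Fintype.sum_eq_add_sum_subtype_ne _ m, adjugate_apply_self]
  simp only [hoff, sum_neg_distrib, Pi.sub_apply, Pi.smul_apply, smul_eq_mul, vecMul, dotProduct,
    sum_mul, sub_eq_add_neg]
  rfl

end Adjugate

section QuasiProjector

variable [Fintype n]

/-- `quasiProj A S` is `rowQuasiProj (subMat A S)` by definition. -/
def rowQuasiProj [Fintype κ] [DecidableEq κ] (X : Matrix κ n R) : Matrix n n R :=
  Xᵀ * (X * Xᵀ).adjugate * X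

theorem rowQuasiProj_submatrix_equiv {ι : Type*} [Fintype ι] [DecidableEq ι] [Fintype κ]
    [DecidableEq κ] (X : Matrix κ n R) (e : ι ≃ κ) :
    rowQuasiProj (X.submatrix e id) = rowQuasiProj X := by
  rw [rowQuasiProj, rowQuasiProj, submatrix_id_mul_transpose, adjugate_submatrix_equiv_self,
    transpose_submatrix, submatrix_mul_equiv, submatrix_mul_equiv, submatrix_id_id]

variable [Fintype κ] [DecidableEq κ]

theorem vecMul_rowQuasiProj (X : Matrix κ n R) (m : κ) :
    X m ᵥ* rowQuasiProj X = (X * Xᵀ).det • X m := by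
  rw [rowQuasiProj, ← mul_apply_eq_vecMul, ← Matrix.mul_assoc, ← Matrix.mul_assoc, mul_adjugate,
    smul_mul, Matrix.one_mul]
  rfl

theorem rowQuasiProj_eq_sum_eraseRow [DecidableEq n] (X : Matrix κ n R) :
    rowQuasiProj X = ∑ m, vecMulVec (X m) (X m) *
      ((X.eraseRow m * (X.eraseRow m)ᵀ).det • 1 - rowQuasiProj (X.eraseRow m)) := by
  rw [rowQuasiProj, Matrix.mul_assoc, transpose_mul_eq_sum_vecMulVec_s4]
  refine sum_congr rfl fun m _ => ?_
  rw [vecMulVec_mul, adjugate_mul_row_eq, eraseRowCol, ← submatrix_id_mul_transpose]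
  have hrow : (fun p : {p // p ≠ m} => (X * Xᵀ) m p) = X m ᵥ* (X.eraseRow m)ᵀ := rfl
  rw [hrow, rowQuasiProj, vecMul_sub, vecMul_smul, vecMul_one, vecMul_vecMul, vecMul_vecMul,
    Matrix.mul_assoc]

end QuasiProjector

end Matrix

theorem Finset.sum_powersetCard_succ_sum_erase {α β : Type*} [Fintype α] [DecidableEq α]
    [AddCommMonoid β] (k : ℕ) (f : Finset α → α → β) :
    ∑ S ∈ univ.powersetCard (k + 1), ∑ m ∈ S, f (S.erase m) m =
      ∑ T ∈ univ.powersetCard k, ∑ m ∈ Tᶜ, f T m := by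
  rw [sum_sigma', sum_sigma']
  refine sum_bij' (fun x _ => ⟨x.1.erase x.2, x.2⟩) (fun y _ => ⟨insert y.2 y.1, y.2⟩)
    ?_ ?_ ?_ ?_ fun _ _ => rfl <;>
    rintro ⟨_, _⟩ h <;> simp_all [card_erase_of_mem, card_insert_of_notMem]

def Finset.subtypeNeEquivErase {α : Type*} [DecidableEq α] {S : Finset α} {m : α} (hm : m ∈ S) :
    {p : S // p ≠ ⟨m, hm⟩} ≃ S.erase m where
  toFun p := ⟨p.1, mem_erase.2 ⟨fun h => p.2 (Subtype.ext h), p.1.2⟩⟩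
  invFun p := ⟨⟨p, mem_of_mem_erase p.2⟩, fun h => ne_of_mem_erase p.2 (congrArg Subtype.val h)⟩
  left_inv _ := rfl
  right_inv _ := rfl

section SubsetQuasiProj

variable {M N : ℕ} (A : Matrix (Fin M) (Fin N) ℝ)

theorem quasiProj_eq_sum_erase (S : Finset (Fin M)) :
    quasiProj A S = ∑ m ∈ S,
      vecMulVec (A m) (A m) * (volSq A (S.erase m) • 1 - quasiProj A (S.erase m)) := by
  have hrows (m : S) : (subMat A S).eraseRow m =
      (subMat A (S.erase m)).submatrix (subtypeNeEquivErase m.2) id := rfl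
  rw [← sum_coe_sort S]
  refine (rowQuasiProj_eq_sum_eraseRow (subMat A S)).trans (sum_congr rfl fun m _ => ?_)
  rw [hrows, rowQuasiProj_submatrix_equiv, submatrix_id_mul_transpose, det_submatrix_equiv_self]
  rfl

theorem vecMulVec_mul_volSq_smul_sub_quasiProj_eq_zero {T : Finset (Fin M)} {m : Fin M}
    (hm : m ∈ T) :
    vecMulVec (A m) (A m) * (volSq A T • 1 - quasiProj A T) = 0 := by
  have hrow : A m ᵥ* quasiProj A T = volSq A T • A m := vecMul_rowQuasiProj (subMat A T) ⟨m, hm⟩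
  rw [vecMulVec_mul, vecMul_sub, vecMul_smul, vecMul_one, hrow, sub_self, vecMulVec_zero]

end SubsetQuasiProj

/-- Total quasi projector recursion: for `n ≥ 2`,
`Φ_n = G (vol_{n−1} I − Φ_{n−1})`, where `G = AᵀA`. -/
theorem totalQuasiProj_recursion {M N : ℕ} (A : Matrix (Fin M) (Fin N) ℝ)
    {n : ℕ} (hn : 2 ≤ n) :
    totalQuasiProj A n =
      Aᵀ * A * (vol A (n - 1) • (1 : Matrix (Fin N) (Fin N) ℝ) - totalQuasiProj A (n - 1)) := by
  obtain ⟨k, rfl⟩ : ∃ k, n = k + 1 := ⟨n - 1, by omega⟩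
  rw [Nat.add_sub_cancel]
  set F : Finset (Fin M) → Fin M → Matrix (Fin N) (Fin N) ℝ :=
    fun T m => vecMulVec (A m) (A m) * (volSq A T • 1 - quasiProj A T)
  calc totalQuasiProj A (k + 1)
      = ∑ S ∈ univ.powersetCard (k + 1), ∑ m ∈ S, F (S.erase m) m :=
        sum_congr rfl fun S _ => quasiProj_eq_sum_erase A S
    _ = ∑ T ∈ univ.powersetCard k, ∑ m ∈ Tᶜ, F T m := sum_powersetCard_succ_sum_erase k F
    _ = ∑ T ∈ univ.powersetCard k, ∑ m, F T m :=
        sum_congr rfl fun T _ => sum_subset (subset_univ _) fun m _ hm =>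
          vecMulVec_mul_volSq_smul_sub_quasiProj_eq_zero A (by simpa using hm)
    _ = ∑ T ∈ univ.powersetCard k, Aᵀ * A * (volSq A T • 1 - quasiProj A T) := by
        simp only [F, ← sum_mul, ← transpose_mul_eq_sum_vecMulVec_s4]
    _ = _ := by rw [← mul_sum, sum_sub_distrib, ← sum_smul]; rfl
end

section
/- Suppose vol_n > 0 and let μ ∈ ℝ be such that xᵀ Φ_n x ≥ μ‖x‖² for all x ∈ ℝ^N. Then for every e ∈ ℝ^N, the expected squared error of one step of the n-row pursuit under volume sampling satisfies Σ_{|S|=n} (v_S²/vol_n) · ‖R_S e‖² ≤ (1 − μ/vol_n) · ‖e‖². -/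
open Matrix BigOperators Finset

/-- Squared Euclidean norm of a vector in `ℝ^N`. -/
def normSq {N : ℕ} (x : Fin N → ℝ) : ℝ := ∑ i, x i ^ 2

/-- The rejection operator `R_S = I − Q_S / v_S²` when `v_S² ≠ 0`
(equal to `I − P_S` for linearly independent rows), and `R_S = I` otherwise. -/
noncomputable def rej {M N : ℕ} (A : Matrix (Fin M) (Fin N) ℝ) (S : Finset (Fin M)) :
    Matrix (Fin N) (Fin N) ℝ :=
  if volSq A S = 0 then 1 else 1 - (volSq A S)⁻¹ • quasiProj A S


/-! `Q_S² = v_S² Q_S` and `Q_S` is symmetric, so for `v_S² ≠ 0` the rejection `R_S` is the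
orthogonal projector `I − Q_S / v_S²`, and Pythagoras gives `v_S² ‖R_S e‖² = v_S² ‖e‖² − eᵀ Q_S e`;
for `v_S² = 0` the Gram matrix is singular, `Q_S = 0`, and the identity holds trivially. Weighting by
`v_S² / vol_n` and summing over `S` turns the expected error into `‖e‖² − eᵀ Φ_n e / vol_n`,
and the lower bound `μ ‖e‖² ≤ eᵀ Φ_n e` finishes. -/

section QuasiProjector

variable {m k R : Type*} [Fintype m] [DecidableEq m] [Fintype k]

theorem isSymm_transpose_mul_adjugate_mul [CommRing R] (B : Matrix m k R) :
    (Bᵀ * (B * Bᵀ).adjugate * B).IsSymm := by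
  have hG : (B * Bᵀ)ᵀ = B * Bᵀ := by rw [transpose_mul, transpose_transpose]
  simp only [IsSymm, transpose_mul, transpose_transpose, adjugate_transpose, hG, Matrix.mul_assoc]

theorem transpose_mul_adjugate_mul_mul_self [CommRing R] (B : Matrix m k R) :
    Bᵀ * (B * Bᵀ).adjugate * B * (Bᵀ * (B * Bᵀ).adjugate * B) =
      (B * Bᵀ).det • (Bᵀ * (B * Bᵀ).adjugate * B) := by
  calc Bᵀ * (B * Bᵀ).adjugate * B * (Bᵀ * (B * Bᵀ).adjugate * B)
      = Bᵀ * ((B * Bᵀ).adjugate * (B * Bᵀ)) * ((B * Bᵀ).adjugate * B) := by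
        simp only [Matrix.mul_assoc]
    _ = (B * Bᵀ).det • (Bᵀ * (B * Bᵀ).adjugate * B) := by
        rw [adjugate_mul, Matrix.mul_smul, Matrix.mul_one, Matrix.smul_mul, Matrix.mul_assoc]

theorem transpose_mul_adjugate_mul_eq_zero {B : Matrix m k ℝ} (h : (B * Bᵀ).det = 0) :
    Bᵀ * (B * Bᵀ).adjugate * B = 0 := by
  have hadj : (B * Bᵀ).adjugate * (B * Bᴴ) = 0 := by
    rw [conjTranspose_eq_transpose_of_trivial, adjugate_mul, h, zero_smul]
  rw [mul_self_mul_conjTranspose_eq_zero] at hadj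
  rw [Matrix.mul_assoc, hadj, Matrix.mul_zero]

end QuasiProjector

theorem dotProduct_sub_mulVec_self_of_isIdempotentElem {k R : Type*} [Fintype k] [CommRing R]
    {P : Matrix k k R} (hsymm : P.IsSymm) (hidem : IsIdempotentElem P) (e : k → R) :
    (e - P *ᵥ e) ⬝ᵥ (e - P *ᵥ e) = e ⬝ᵥ e - e ⬝ᵥ (P *ᵥ e) := by
  have hPe : (P *ᵥ e) ⬝ᵥ (P *ᵥ e) = e ⬝ᵥ (P *ᵥ e) := by
    calc (P *ᵥ e) ⬝ᵥ (P *ᵥ e) = e ⬝ᵥ (Pᵀ *ᵥ (P *ᵥ e)) := by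
          rw [dotProduct_mulVec e Pᵀ, vecMul_transpose]
      _ = e ⬝ᵥ (P *ᵥ e) := by rw [hsymm, mulVec_mulVec, hidem.eq]
  have hcomm : (P *ᵥ e) ⬝ᵥ e = e ⬝ᵥ (P *ᵥ e) := dotProduct_comm _ _
  simp only [dotProduct_sub, sub_dotProduct, hPe, hcomm]
  ring

theorem normSq_eq_dotProduct {N : ℕ} (x : Fin N → ℝ) : normSq x = x ⬝ᵥ x := by
  simp [normSq, dotProduct, sq]

theorem volSq_mul_normSq_rej_mulVec {M N : ℕ} (A : Matrix (Fin M) (Fin N) ℝ)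
    (S : Finset (Fin M)) (e : Fin N → ℝ) :
    volSq A S * normSq (rej A S *ᵥ e) = volSq A S * normSq e - e ⬝ᵥ (quasiProj A S *ᵥ e) := by
  by_cases h : volSq A S = 0
  · rw [h, quasiProj, transpose_mul_adjugate_mul_eq_zero h]
    simp
  · have hsq : quasiProj A S * quasiProj A S = volSq A S • quasiProj A S :=
      transpose_mul_adjugate_mul_mul_self _
    have hidem : IsIdempotentElem ((volSq A S)⁻¹ • quasiProj A S) := by
      rw [IsIdempotentElem, smul_mul_smul_comm, hsq, smul_smul, inv_mul_cancel_right₀ h]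
    have hsymm : ((volSq A S)⁻¹ • quasiProj A S).IsSymm :=
      (isSymm_transpose_mul_adjugate_mul _).smul _
    rw [rej, if_neg h, sub_mulVec, one_mulVec, normSq_eq_dotProduct, normSq_eq_dotProduct,
      dotProduct_sub_mulVec_self_of_isIdempotentElem hsymm hidem, smul_mulVec, dotProduct_smul,
      smul_eq_mul, mul_sub, mul_inv_cancel_left₀ h]

theorem dotProduct_totalQuasiProj_mulVec {M N : ℕ} (A : Matrix (Fin M) (Fin N) ℝ) (n : ℕ)
    (e : Fin N → ℝ) :
    e ⬝ᵥ (totalQuasiProj A n *ᵥ e) =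
      ∑ S ∈ Finset.univ.powersetCard n, e ⬝ᵥ (quasiProj A S *ᵥ e) := by
  rw [totalQuasiProj, sum_mulVec, dotProduct_sum]

theorem sum_volSq_div_vol_mul_normSq_rej_mulVec {M N n : ℕ} (A : Matrix (Fin M) (Fin N) ℝ)
    (hvol : vol A n ≠ 0) (e : Fin N → ℝ) :
    ∑ S ∈ Finset.univ.powersetCard n, (volSq A S / vol A n) * normSq (rej A S *ᵥ e) =
      normSq e - e ⬝ᵥ (totalQuasiProj A n *ᵥ e) / vol A n := by
  simp only [div_mul_eq_mul_div, volSq_mul_normSq_rej_mulVec, ← Finset.sum_div,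
    Finset.sum_sub_distrib, ← Finset.sum_mul, ← dotProduct_totalQuasiProj_mulVec]
  rw [← vol, sub_div, mul_div_cancel_left₀ _ hvol]

/-- One step of the `n`-row pursuit under volume sampling: if `vol_n > 0` and
`μ` is a lower bound on the quadratic form of `Φ_n`, then the expected squared
error `Σ_{|S|=n} (v_S²/vol_n) ‖R_S e‖²` is at most `(1 − μ/vol_n) ‖e‖²`. -/
theorem expected_gain_one_step_volume_sampling {M N n : ℕ}
    (A : Matrix (Fin M) (Fin N) ℝ) (hvol : 0 < vol A n) (μ : ℝ)
    (hμ : ∀ x : Fin N → ℝ, μ * normSq x ≤ x ⬝ᵥ (totalQuasiProj A n *ᵥ x))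
    (e : Fin N → ℝ) :
    ∑ S ∈ Finset.univ.powersetCard n, (volSq A S / vol A n) * normSq (rej A S *ᵥ e) ≤
      (1 - μ / vol A n) * normSq e := by
  rw [sum_volSq_div_vol_mul_normSq_rej_mulVec A hvol.ne' e]
  calc normSq e - e ⬝ᵥ (totalQuasiProj A n *ᵥ e) / vol A n
      ≤ normSq e - μ * normSq e / vol A n := by gcongr; exact hμ e
    _ = (1 - μ / vol A n) * normSq e := by ring
end

section
/- Suppose vol_n > 0. Then for every e₀ ∈ ℝ^N and every k ≥ 0, the expected error vector after k independent volume-sampled steps of the n-row pursuit satisfies Σ_{(S_1,…,S_k)} (Π_{j=1}^k v_{S_j}²/vol_n) · (R_{S_k} ⋯ R_{S_1} e₀) = (I − Φ_n/vol_n)^k · e₀, where the sum ranges over all k-tuples of n-element subsets of {1,…,M}. -/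
open Matrix BigOperators Finset

/-- If the Gram determinant vanishes, the quasi projector is zero. -/
lemma quasiProj_eq_zero_of_volSq_eq_zero {M N : ℕ} (A : Matrix (Fin M) (Fin N) ℝ)
    (S : Finset (Fin M)) (h : volSq A S = 0) : quasiProj A S = 0 := by
  set B := subMat A S
  have hadj : (B * Bᵀ).adjugate * (B * Bᵀ) = 0 := by
    rw [Matrix.adjugate_mul, show (B * Bᵀ).det = 0 from h, zero_smul]
  have hBH : Bᴴ = Bᵀ := Matrix.conjTranspose_eq_transpose_of_trivial B
  have h2 : (B * Bᵀ).adjugate * B = 0 := by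
    have := (Matrix.mul_self_mul_conjTranspose_eq_zero B ((B * Bᵀ).adjugate))
    rw [hBH] at this
    exact this.mp hadj
  unfold quasiProj
  rw [Matrix.mul_assoc, h2, Matrix.mul_zero]

/-- One-step expectation identity. -/
lemma step_identity {M N n : ℕ} (A : Matrix (Fin M) (Fin N) ℝ) (hvol : 0 < vol A n) :
    ∑ S ∈ Finset.univ.powersetCard n, (volSq A S / vol A n) • rej A S =
      (1 : Matrix (Fin N) (Fin N) ℝ) - (vol A n)⁻¹ • totalQuasiProj A n := by
  have hv : vol A n ≠ 0 := ne_of_gt hvol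
  have hterm : ∀ S ∈ Finset.univ.powersetCard n,
      (volSq A S / vol A n) • rej A S =
        (volSq A S / vol A n) • (1 : Matrix (Fin N) (Fin N) ℝ)
          - (vol A n)⁻¹ • quasiProj A S := by
    intro S _
    by_cases h : volSq A S = 0
    · simp [rej, h, quasiProj_eq_zero_of_volSq_eq_zero A S h]
    · rw [rej, if_neg h, smul_sub, smul_smul]
      congr 2
      field_simp
  rw [Finset.sum_congr rfl hterm, Finset.sum_sub_distrib, ← Finset.sum_smul, ← Finset.smul_sum]
  congr 1
  have hone : (∑ S ∈ Finset.univ.powersetCard n, volSq A S / vol A n) = 1 := by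
    rw [← Finset.sum_div, ← vol, div_self hv]
  rw [hone, one_smul]

lemma sum_mulVec' {N : ℕ} {α : Type*} (s : Finset α) (f : α → Matrix (Fin N) (Fin N) ℝ)
    (v : Fin N → ℝ) : (∑ i ∈ s, f i) *ᵥ v = ∑ i ∈ s, f i *ᵥ v := by
  ext j
  simp only [Matrix.mulVec, dotProduct, Finset.sum_apply, Matrix.sum_apply,
    Finset.sum_mul]
  rw [Finset.sum_comm]

lemma sum_piFinset_succ' {α β : Type*} [DecidableEq α] [AddCommMonoid β] {k : ℕ} (P : Finset α)
    (g : (Fin (k + 1) → α) → β) :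
    ∑ T ∈ Fintype.piFinset (fun _ : Fin (k + 1) => P), g T =
      ∑ s ∈ P, ∑ T ∈ Fintype.piFinset (fun _ : Fin k => P), g (Fin.cons s T) := by
  rw [← Finset.sum_product']
  refine Finset.sum_nbij' (fun T => (T 0, Fin.tail T)) (fun p => Fin.cons p.1 p.2) ?_ ?_ ?_ ?_ ?_
  · intro T hT
    simp only [Fintype.mem_piFinset] at hT
    simp [Finset.mem_product, Fintype.mem_piFinset, Fin.tail, hT]
  · intro p hp
    simp only [Finset.mem_product, Fintype.mem_piFinset] at hp
    simp only [Fintype.mem_piFinset]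
    intro i
    refine Fin.cases ?_ ?_ i
    · simpa using hp.1
    · intro j; simpa using hp.2 j
  · intro T _; exact Fin.cons_self_tail T
  · intro p _; simp
  · intro T _; rw [Fin.cons_self_tail]

/-- The key matrix identity. -/
lemma expected_matrix_eq_power {M N n : ℕ} (A : Matrix (Fin M) (Fin N) ℝ)
    (hvol : 0 < vol A n) (k : ℕ) :
    ∑ T ∈ Fintype.piFinset (fun _ : Fin k => Finset.univ.powersetCard n),
        (∏ j, volSq A (T j) / vol A n) • (List.ofFn fun j => rej A (T j)).reverse.prod =
      ((1 : Matrix (Fin N) (Fin N) ℝ) - (vol A n)⁻¹ • totalQuasiProj A n) ^ k := by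
  induction k with
  | zero => simp
  | succ k ih =>
    rw [sum_piFinset_succ']
    have hfun : ∀ (s : Finset (Fin M)) (T : Fin k → Finset (Fin M)),
        (∏ j : Fin (k + 1), volSq A ((Fin.cons s T : Fin (k + 1) → Finset (Fin M)) j) / vol A n) •
          (List.ofFn fun j : Fin (k + 1) => rej A ((Fin.cons s T : Fin (k + 1) → Finset (Fin M)) j)).reverse.prod =
        ((∏ j, volSq A (T j) / vol A n) • (List.ofFn fun j => rej A (T j)).reverse.prod) *
          ((volSq A s / vol A n) • rej A s) := by
      intro s T
      have hprod : (∏ j : Fin (k + 1), volSq A ((Fin.cons s T : Fin (k + 1) → Finset (Fin M)) j) / vol A n) =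
          (volSq A s / vol A n) * ∏ j, volSq A (T j) / vol A n := by
        rw [Fin.prod_univ_succ]
        simp
      have hlist : (List.ofFn fun j : Fin (k + 1) => rej A ((Fin.cons s T : Fin (k + 1) → Finset (Fin M)) j)) =
          rej A s :: List.ofFn (fun j : Fin k => rej A (T j)) := by
        rw [List.ofFn_succ]; rfl
      rw [hprod, hlist, List.reverse_cons, List.prod_append, List.prod_singleton,
        Matrix.smul_mul, Matrix.mul_smul, smul_smul]
      congr 1
      ring
    simp_rw [hfun]
    simp_rw [← Finset.sum_mul]
    rw [ih, ← Finset.mul_sum, step_identity A hvol, pow_succ]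

/-- The pursuit acts in expectation as a power iteration with the expected rejector:
if `vol_n > 0`, the expected error vector after `k` independent volume-sampled steps is
`Σ_{(S_1,…,S_k)} (Π_j v_{S_j}²/vol_n) (R_{S_k} ⋯ R_{S_1} e₀) = (I − Φ_n/vol_n)^k e₀`. -/
theorem expected_error_vector_eq_power_iteration {M N n : ℕ}
    (A : Matrix (Fin M) (Fin N) ℝ) (hvol : 0 < vol A n)
    (e₀ : Fin N → ℝ) (k : ℕ) :
    ∑ T ∈ Fintype.piFinset (fun _ : Fin k => Finset.univ.powersetCard n),
        (∏ j, volSq A (T j) / vol A n) •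
          ((List.ofFn fun j => rej A (T j)).reverse.prod *ᵥ e₀) =
      (((1 : Matrix (Fin N) (Fin N) ℝ) - (vol A n)⁻¹ • totalQuasiProj A n) ^ k) *ᵥ e₀ := by
  rw [← expected_matrix_eq_power A hvol k, sum_mulVec']
  congr 1
  ext T
  rw [Matrix.smul_mulVec]
end

section
/- Let V > 0 satisfy v_S² ≤ V for every n-element subset S of {1,…,M}, and let μ ∈ ℝ with xᵀ Φ_n x ≥ μ‖x‖² for all x ∈ ℝ^N. For each subset S define the relaxed update T_S e := e − μ_S P̂_S e, where P̂_S := Q_S/v_S² if v_S² ≠ 0 and P̂_S := 0 otherwise, and μ_S := 1 − √(1 − v_S²/V). Then for every e ∈ ℝ^N, the expected squared error of one step of the n-row pursuit with uniformly random subset choice satisfies (1/C(M,n)) · Σ_{|S|=n} ‖T_S e‖² ≤ (1 − μ/(C(M,n) · V)) · ‖e‖², where C(M,n) = M choose n. -/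
open Matrix BigOperators Finset

/-- `P̂_S = Q_S / v_S²` if `v_S² ≠ 0` (the orthogonal projector onto the row span of
`A_S` when its rows are linearly independent), and `0` otherwise. -/
noncomputable def projHat {M N : ℕ} (A : Matrix (Fin M) (Fin N) ℝ) (S : Finset (Fin M)) :
    Matrix (Fin N) (Fin N) ℝ :=
  if volSq A S = 0 then 0 else (volSq A S)⁻¹ • quasiProj A S

lemma quasiProj_transpose {M N : ℕ} (A : Matrix (Fin M) (Fin N) ℝ) (S : Finset (Fin M)) :
    (quasiProj A S)ᵀ = quasiProj A S := by
  unfold quasiProj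
  rw [transpose_mul, transpose_mul, transpose_transpose, Matrix.adjugate_transpose,
    transpose_mul, transpose_transpose]
  simp [Matrix.mul_assoc]

lemma quasiProj_mul_self {M N : ℕ} (A : Matrix (Fin M) (Fin N) ℝ) (S : Finset (Fin M)) :
    quasiProj A S * quasiProj A S = volSq A S • quasiProj A S := by
  unfold quasiProj volSq
  set B := subMat A S with hB
  calc Bᵀ * (B * Bᵀ).adjugate * B * (Bᵀ * (B * Bᵀ).adjugate * B)
      = Bᵀ * ((B * Bᵀ).adjugate * (B * Bᵀ) * (B * Bᵀ).adjugate) * B := by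
        simp only [Matrix.mul_assoc]
    _ = (B * Bᵀ).det • (Bᵀ * (B * Bᵀ).adjugate * B) := by
        rw [Matrix.adjugate_mul, Matrix.smul_mul, Matrix.one_mul, Matrix.mul_smul,
          Matrix.smul_mul]

lemma quasiProj_mulVec_eq_zero {M N : ℕ} (A : Matrix (Fin M) (Fin N) ℝ) (S : Finset (Fin M))
    (h : volSq A S = 0) (e : Fin N → ℝ) : quasiProj A S *ᵥ e = 0 := by
  unfold quasiProj
  set B := subMat A S with hB
  set w := (B * Bᵀ).adjugate *ᵥ (B *ᵥ e) with hw
  have hGw : (B * Bᵀ) *ᵥ w = 0 := by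
    rw [hw, mulVec_mulVec, Matrix.mul_adjugate]
    rw [show (B * Bᵀ).det = 0 from h, zero_smul, Matrix.zero_mulVec]
  have hBw : Bᵀ *ᵥ w = 0 := by
    have h0 : (Bᵀ *ᵥ w) ⬝ᵥ (Bᵀ *ᵥ w) = 0 := by
      rw [Matrix.dotProduct_mulVec, Matrix.vecMul_transpose, mulVec_mulVec, hGw,
        zero_dotProduct]
    exact dotProduct_self_eq_zero.mp h0
  calc (Bᵀ * (B * Bᵀ).adjugate * B) *ᵥ e = Bᵀ *ᵥ w := by
        rw [hw, ← mulVec_mulVec, ← mulVec_mulVec]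
    _ = 0 := hBw

lemma step_eq {M N : ℕ} (A : Matrix (Fin M) (Fin N) ℝ) (S : Finset (Fin M))
    (V : ℝ) (hV : 0 < V) (hSle : volSq A S ≤ V) (e : Fin N → ℝ) :
    normSq (e - (1 - Real.sqrt (1 - volSq A S / V)) • (projHat A S *ᵥ e)) =
      normSq e - V⁻¹ * (e ⬝ᵥ (quasiProj A S *ᵥ e)) := by
  by_cases h : volSq A S = 0
  · rw [quasiProj_mulVec_eq_zero A S h e]
    simp [projHat, h, normSq]
  · set v := volSq A S with hv
    set t : ℝ := 1 - Real.sqrt (1 - v / V) with ht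
    set P := projHat A S with hP
    have hPdef : P = v⁻¹ • quasiProj A S := by rw [hP, projHat, if_neg h]
    set u := P *ᵥ e with hu
    have expand : normSq (e - t • u) = normSq e - 2 * t * (e ⬝ᵥ u) + t ^ 2 * (u ⬝ᵥ u) := by
      simp only [normSq, dotProduct, Pi.sub_apply, Pi.smul_apply, smul_eq_mul,
        Finset.mul_sum, ← Finset.sum_add_distrib, ← Finset.sum_sub_distrib]
      exact Finset.sum_congr rfl fun i _ => by ring
    have hPt : Pᵀ = P := by
      rw [hPdef, Matrix.transpose_smul, quasiProj_transpose]
    have hPP : P * P = P := by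
      rw [hPdef, Matrix.smul_mul, Matrix.mul_smul, quasiProj_mul_self, smul_smul, smul_smul]
      congr 1
      rw [mul_assoc, ← hv, inv_mul_cancel₀ h, mul_one]
    have huu : u ⬝ᵥ u = e ⬝ᵥ u := by
      have h1 : e ⬝ᵥ ((Pᵀ * P) *ᵥ e) = u ⬝ᵥ u := by
        rw [← mulVec_mulVec, Matrix.dotProduct_mulVec, Matrix.vecMul_transpose, ← hu]
      rw [← h1, hPt, hPP]
    have hcoef : 2 * t - t ^ 2 = v / V := by
      have hnn : (0:ℝ) ≤ 1 - v / V := by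
        have : v / V ≤ 1 := (div_le_one hV).mpr hSle
        linarith
      have h2 : (1 - t) ^ 2 = Real.sqrt (1 - v / V) ^ 2 := by rw [ht]; ring
      have h3 := h2.trans (Real.sq_sqrt hnn)
      nlinarith [h3]
    have heu : e ⬝ᵥ u = v⁻¹ * (e ⬝ᵥ (quasiProj A S *ᵥ e)) := by
      rw [hu, hPdef, Matrix.smul_mulVec, dotProduct_smul, smul_eq_mul]
    rw [expand, huu, heu]
    have hq : 2 * t * (v⁻¹ * (e ⬝ᵥ (quasiProj A S *ᵥ e))) -
        t ^ 2 * (v⁻¹ * (e ⬝ᵥ (quasiProj A S *ᵥ e))) =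
        V⁻¹ * (e ⬝ᵥ (quasiProj A S *ᵥ e)) := by
      rw [show 2 * t * (v⁻¹ * (e ⬝ᵥ (quasiProj A S *ᵥ e))) -
          t ^ 2 * (v⁻¹ * (e ⬝ᵥ (quasiProj A S *ᵥ e))) =
          (2 * t - t ^ 2) * (v⁻¹ * (e ⬝ᵥ (quasiProj A S *ᵥ e))) from by ring, hcoef]
      field_simp
    linarith

lemma normSq_nonneg {N : ℕ} (x : Fin N → ℝ) : 0 ≤ normSq x :=
  Finset.sum_nonneg fun i _ => sq_nonneg _


/-- One step of the `n`-row pursuit with uniformly random subset choice and relaxed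
updates `T_S e = e − μ_S P̂_S e`, `μ_S = 1 − √(1 − v_S²/V)`: if `v_S² ≤ V` for all
`n`-element subsets `S` (`V > 0`) and `μ` is a lower bound on the quadratic form of
`Φ_n`, then `(1/C(M,n)) Σ_{|S|=n} ‖T_S e‖² ≤ (1 − μ/(C(M,n)·V)) ‖e‖²`. -/
theorem expected_gain_uniform_sampling {M N n : ℕ} (A : Matrix (Fin M) (Fin N) ℝ)
    (V : ℝ) (hV : 0 < V)
    (hle : ∀ S ∈ Finset.univ.powersetCard n, volSq A (S : Finset (Fin M)) ≤ V)
    (μ : ℝ) (hμ : ∀ x : Fin N → ℝ, μ * normSq x ≤ x ⬝ᵥ (totalQuasiProj A n *ᵥ x))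
    (e : Fin N → ℝ) :
    (1 / (M.choose n : ℝ)) *
        ∑ S ∈ Finset.univ.powersetCard n,
          normSq (e - (1 - Real.sqrt (1 - volSq A S / V)) • (projHat A S *ᵥ e)) ≤
      (1 - μ / ((M.choose n : ℝ) * V)) * normSq e := by
  by_cases hn : M < n
  · have hemp : (Finset.univ : Finset (Fin M)).powersetCard n = ∅ := by
      rw [Finset.powersetCard_eq_empty, Finset.card_univ, Fintype.card_fin]; exact hn
    have hc : (M.choose n : ℝ) = 0 := by
      rw [Nat.choose_eq_zero_of_lt hn]; norm_num
    rw [hemp, hc]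
    simp [normSq_nonneg e]
  · push_neg at hn
    have hc0 : 0 < (M.choose n : ℝ) := by
      exact_mod_cast Nat.choose_pos hn
    have hsum : ∑ S ∈ Finset.univ.powersetCard n,
        normSq (e - (1 - Real.sqrt (1 - volSq A S / V)) • (projHat A S *ᵥ e)) =
        (M.choose n : ℝ) * normSq e - V⁻¹ * (e ⬝ᵥ (totalQuasiProj A n *ᵥ e)) := by
      rw [Finset.sum_congr rfl fun S hS => step_eq A S V hV (hle S hS) e,
        Finset.sum_sub_distrib, Finset.sum_const, ← Finset.mul_sum]
      congr 1
      · rw [Finset.card_powersetCard, Finset.card_univ, Fintype.card_fin, nsmul_eq_mul]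
      · congr 1
        have h1 : totalQuasiProj A n *ᵥ e =
            ∑ S ∈ Finset.univ.powersetCard n, quasiProj A S *ᵥ e := by
          unfold totalQuasiProj
          ext i
          simp only [Matrix.mulVec, dotProduct, Matrix.sum_apply, Finset.sum_apply,
            Finset.sum_mul]
          exact Finset.sum_comm
        rw [h1]
        simp only [dotProduct, Finset.sum_apply, Finset.mul_sum]
        exact Finset.sum_comm
    have hμ' := hμ e
    have key : (M.choose n : ℝ) * normSq e - V⁻¹ * (e ⬝ᵥ (totalQuasiProj A n *ᵥ e)) ≤
        (M.choose n : ℝ) * normSq e - V⁻¹ * (μ * normSq e) := by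
      have : V⁻¹ * (μ * normSq e) ≤ V⁻¹ * (e ⬝ᵥ (totalQuasiProj A n *ᵥ e)) :=
        mul_le_mul_of_nonneg_left hμ' (inv_nonneg.mpr hV.le)
      linarith
    calc (1 / (M.choose n : ℝ)) *
          ∑ S ∈ Finset.univ.powersetCard n,
            normSq (e - (1 - Real.sqrt (1 - volSq A S / V)) • (projHat A S *ᵥ e))
        = (1 / (M.choose n : ℝ)) *
            ((M.choose n : ℝ) * normSq e - V⁻¹ * (e ⬝ᵥ (totalQuasiProj A n *ᵥ e))) := by
          rw [hsum]
      _ ≤ (1 / (M.choose n : ℝ)) *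
            ((M.choose n : ℝ) * normSq e - V⁻¹ * (μ * normSq e)) := by
          apply mul_le_mul_of_nonneg_left key (by positivity)
      _ = (1 - μ / ((M.choose n : ℝ) * V)) * normSq e := by
          field_simp
end
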